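/- arXiv:1801.10504 — 7 statements merged into one kernel-verified Lean document; each statement's English description precedes it below -/
import Mathlib

section
/- Let ρ, β, δ > 0, let M be a natural number with M ≥ 1, and suppose condition C1 holds. Then for every natural number k₁ with 1 ≤ k₁ ≤ M and every family of nonnegative reals g₁, …, g_{k₁}, one has log₂(1 + β/(1 + (k₁−1)/M)) + Σ_{i=1}^{k₁} log₂( ((1+ρ+δ(gᵢ+1))·(1+δgᵢ)) / ((1+δ(gᵢ+1))·(1+ρ+δgᵢ)) ) ≥ 0. (This is the worst-case marginal gain of scheduling one additional clause user, so under C1 the weighted sum-rate objective is non-decreasing in the number of scheduled clause users.) -/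
open Real Finset

/-- Lemma 1 (worst-case form): under condition C1, the worst-case marginal gain of
scheduling one additional clause user is nonnegative, for any number `k₁ ≤ M` of
scheduled literal users and any nonnegative interference counts `g i`. -/
theorem jsdm_lemma1_marginal_gain_nonneg
    (ρ β δ : ℝ) (hρ : 0 < ρ) (hβ : 0 < β) (hδ : 0 < δ)
    (M : ℕ) (hM : 1 ≤ M)
    (hC1 : 0 ≤ logb 2 (1 + β / (1 + ((M : ℝ) - 1) / (M : ℝ))) +
      (M : ℝ) * logb 2 (1 - ρ * δ / ((1 + ρ) * (1 + δ))))
    (k₁ : ℕ) (hk₁ : 1 ≤ k₁) (hk₁M : k₁ ≤ M)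
    (g : Fin k₁ → ℝ) (hg : ∀ i, 0 ≤ g i) :
    0 ≤ logb 2 (1 + β / (1 + ((k₁ : ℝ) - 1) / (M : ℝ))) +
      ∑ i, logb 2 (((1 + ρ + δ * (g i + 1)) * (1 + δ * g i)) /
        ((1 + δ * (g i + 1)) * (1 + ρ + δ * g i))) := by
  have hb2 : (1:ℝ) < 2 := by norm_num
  have hMpos : (0:ℝ) < M := by exact_mod_cast Nat.lt_of_lt_of_le Nat.zero_lt_one hM
  have hk1pos : (1:ℝ) ≤ k₁ := by exact_mod_cast hk₁
  have hk1M : (k₁:ℝ) ≤ M := by exact_mod_cast hk₁M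
  set w : ℝ := 1 - ρ * δ / ((1 + ρ) * (1 + δ)) with hw
  have hden : (0:ℝ) < (1 + ρ) * (1 + δ) := by positivity
  have hwpos : 0 < w := by
    rw [hw, sub_pos, div_lt_one hden]; nlinarith
  have hw1 : w ≤ 1 := by
    have : 0 ≤ ρ * δ / ((1 + ρ) * (1 + δ)) := by positivity
    rw [hw]; linarith
  have hlogw : logb 2 w ≤ 0 := Real.logb_nonpos hb2 (le_of_lt hwpos) hw1
  -- each summand is at least `logb 2 w`
  have hterm : ∀ i, logb 2 w ≤ logb 2 (((1 + ρ + δ * (g i + 1)) * (1 + δ * g i)) /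
        ((1 + δ * (g i + 1)) * (1 + ρ + δ * g i))) := by
    intro i
    have hgi := hg i
    have hD : (0:ℝ) < (1 + δ * (g i + 1)) * (1 + ρ + δ * g i) := by positivity
    have heq : ((1 + ρ + δ * (g i + 1)) * (1 + δ * g i)) /
        ((1 + δ * (g i + 1)) * (1 + ρ + δ * g i))
        = 1 - ρ * δ / ((1 + δ * (g i + 1)) * (1 + ρ + δ * g i)) := by
      field_simp
      ring
    rw [heq]
    apply Real.logb_le_logb_of_le hb2 hwpos
    have hdle : (1 + ρ) * (1 + δ) ≤ (1 + δ * (g i + 1)) * (1 + ρ + δ * g i) := by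
      nlinarith [mul_nonneg hδ.le hgi, mul_nonneg (mul_nonneg hδ.le hgi) hρ.le,
        sq_nonneg (δ * g i), mul_nonneg (mul_nonneg hδ.le hgi) hδ.le]
    have := div_le_div_of_nonneg_left (by positivity : (0:ℝ) ≤ ρ * δ) hden hdle
    rw [hw]; linarith
  -- sum bound
  have hsum : (M:ℝ) * logb 2 w ≤
      ∑ i, logb 2 (((1 + ρ + δ * (g i + 1)) * (1 + δ * g i)) /
        ((1 + δ * (g i + 1)) * (1 + ρ + δ * g i))) := by
    calc (M:ℝ) * logb 2 w ≤ (k₁:ℝ) * logb 2 w :=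
          mul_le_mul_of_nonpos_right hk1M hlogw
      _ = ∑ _i : Fin k₁, logb 2 w := by
          simp [Finset.sum_const, Finset.card_univ, mul_comm]
      _ ≤ _ := Finset.sum_le_sum fun i _ => hterm i
  -- first term monotonicity
  have hfirst : logb 2 (1 + β / (1 + ((M : ℝ) - 1) / (M : ℝ)))
      ≤ logb 2 (1 + β / (1 + ((k₁ : ℝ) - 1) / (M : ℝ))) := by
    have hk1den : (0:ℝ) < 1 + ((k₁:ℝ) - 1) / M := by
      have : (0:ℝ) ≤ ((k₁:ℝ) - 1) / M := by
        apply div_nonneg (by linarith) hMpos.le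
      linarith
    have hdle : 1 + ((k₁:ℝ) - 1) / M ≤ 1 + ((M:ℝ) - 1) / M := by
      have h : ((k₁:ℝ) - 1) / M ≤ ((M:ℝ) - 1) / M := by
        gcongr
      linarith
    have hMden : (0:ℝ) < 1 + ((M:ℝ) - 1) / M := by
      have : (0:ℝ) ≤ ((M:ℝ) - 1) / M := div_nonneg (by linarith) hMpos.le
      linarith
    apply Real.logb_le_logb_of_le hb2
      (by have := div_pos hβ hMden; linarith)
    have := div_le_div_of_nonneg_left hβ.le hk1den hdle
    linarith
  linarith
end

section
/- Let ρ, β, δ > 0, let M and D be natural numbers with M ≥ 1 and D ≥ 1, and suppose condition C2 holds. Then for every natural number k₂ with 1 ≤ k₂ ≤ D and every family of nonnegative reals f₁, …, f_{k₂}, one has log₂(1 + ρ/(1 + (k₂−1)δ)) + Σ_{j=1}^{k₂} log₂( ((βM+M+fⱼ+1)·(M+fⱼ)) / ((M+fⱼ+1)·(βM+M+fⱼ)) ) ≥ 0. (This is the worst-case marginal gain of scheduling one additional literal user, so under C2 the weighted sum-rate objective is non-decreasing in the number of scheduled literal users, and the optimum schedules all M literal users.) -/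
open Real Finset

/-- Lemma 2 (worst-case form): under condition C2, the worst-case marginal gain of
scheduling one additional literal user is nonnegative, for any number `k₂ ≤ D` of
scheduled clause users and any nonnegative interference counts `f j`. -/
theorem jsdm_lemma2_marginal_gain_nonneg
    (ρ β δ : ℝ) (hρ : 0 < ρ) (hβ : 0 < β) (hδ : 0 < δ)
    (M D : ℕ) (hM : 1 ≤ M) (hD : 1 ≤ D)
    (hC2 : 0 ≤ logb 2 (1 + ρ / (1 + ((D : ℝ) - 1) * δ)) +
      (D : ℝ) * logb 2 (1 - β / ((β + 1) * ((M : ℝ) + 1))))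
    (k₂ : ℕ) (hk₂ : 1 ≤ k₂) (hk₂D : k₂ ≤ D)
    (f : Fin k₂ → ℝ) (hf : ∀ j, 0 ≤ f j) :
    0 ≤ logb 2 (1 + ρ / (1 + ((k₂ : ℝ) - 1) * δ)) +
      ∑ j, logb 2 (((β * (M : ℝ) + (M : ℝ) + f j + 1) * ((M : ℝ) + f j)) /
        (((M : ℝ) + f j + 1) * (β * (M : ℝ) + (M : ℝ) + f j))) := by
  have hM1 : (1:ℝ) ≤ (M:ℝ) := by exact_mod_cast hM
  have hk1 : (1:ℝ) ≤ (k₂:ℝ) := by exact_mod_cast hk₂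
  have hkD : (k₂:ℝ) ≤ (D:ℝ) := by exact_mod_cast hk₂D
  set c : ℝ := 1 - β / ((β + 1) * ((M : ℝ) + 1)) with hc
  have hden : 0 < (β+1)*((M:ℝ)+1) := by positivity
  have hq1 : β / ((β+1)*((M:ℝ)+1)) < 1 := by
    rw [div_lt_one hden]; nlinarith
  have hc0 : 0 < c := by rw [hc]; linarith
  have hc1 : c ≤ 1 := by
    have h0 : 0 ≤ β / ((β+1)*((M:ℝ)+1)) := by positivity
    rw [hc]; linarith
  have hL0 : logb 2 c ≤ 0 := Real.logb_nonpos one_lt_two (le_of_lt hc0) hc1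
  -- per-term bound
  have hterm : ∀ j, logb 2 c ≤ logb 2 (((β * (M : ℝ) + (M : ℝ) + f j + 1) * ((M : ℝ) + f j)) /
      (((M : ℝ) + f j + 1) * (β * (M : ℝ) + (M : ℝ) + f j))) := by
    intro j
    have hfj := hf j
    have hB : 0 < ((M:ℝ) + f j + 1) * (β * (M:ℝ) + (M:ℝ) + f j) := by positivity
    have hle : c ≤ ((β * (M : ℝ) + (M : ℝ) + f j + 1) * ((M : ℝ) + f j)) /
        (((M : ℝ) + f j + 1) * (β * (M : ℝ) + (M : ℝ) + f j)) := by
      rw [hc, le_div_iff₀ hB, sub_mul, one_mul, div_mul_eq_mul_div, sub_le_iff_le_add,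
        ← sub_le_iff_le_add', le_div_iff₀ hden]
      nlinarith [mul_nonneg hfj hβ.le, mul_nonneg hfj hfj,
        mul_nonneg (mul_nonneg hfj hfj) hβ.le, mul_nonneg hfj (mul_nonneg hβ.le (by linarith : (0:ℝ) ≤ (M:ℝ))),
        mul_nonneg (mul_nonneg hfj hβ.le) hβ.le]
    exact Real.logb_le_logb_of_le one_lt_two hc0 hle
  -- sum bound
  have hsum : (k₂:ℝ) * logb 2 c ≤ ∑ j, logb 2 (((β * (M : ℝ) + (M : ℝ) + f j + 1) * ((M : ℝ) + f j)) /
      (((M : ℝ) + f j + 1) * (β * (M : ℝ) + (M : ℝ) + f j))) := by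
    calc (k₂:ℝ) * logb 2 c = ∑ _j : Fin k₂, logb 2 c := by
          simp [Finset.sum_const, mul_comm]
      _ ≤ _ := Finset.sum_le_sum fun j _ => hterm j
  have hDL : (D:ℝ) * logb 2 c ≤ (k₂:ℝ) * logb 2 c :=
    mul_le_mul_of_nonpos_right hkD hL0
  -- first log term monotone
  have hdk : 0 < 1 + ((k₂:ℝ) - 1) * δ := by nlinarith
  have hdD : 0 < 1 + ((D:ℝ) - 1) * δ := by nlinarith
  have hdiv : ρ / (1 + ((D:ℝ) - 1) * δ) ≤ ρ / (1 + ((k₂:ℝ) - 1) * δ) := by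
    apply div_le_div_of_nonneg_left hρ.le hdk
    nlinarith
  have hfirst : logb 2 (1 + ρ / (1 + ((D:ℝ) - 1) * δ)) ≤
      logb 2 (1 + ρ / (1 + ((k₂:ℝ) - 1) * δ)) := by
    apply Real.logb_le_logb_of_le one_lt_two
    · positivity
    · linarith
  linarith
end

section
/- Let ρ, β, δ > 0, let M and D be natural numbers with M ≥ 1 and D ≥ 1, and suppose condition C3 holds. Then for every natural number d₁ with 1 ≤ d₁ ≤ D, one has M·log₂((1 + ρ + (d₁−1)δ)/((1 + (d₁−1)δ)(1+ρ))) + d₁·log₂((βM + 2M − 1)/((2M−1)(1+β))) + log₂(1+β) ≥ 0. (This is the worst-case gain of moving from a schedule with d₁−1 interference-free clause users to one with d₁ clause users under maximal interference, so under C3 the objective increases with the number of allowed clause users.) -/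
open Real

/-- Lemma 3 (worst-case form): under condition C3, the worst-case gain of moving from
`d₁ - 1` interference-free clause users to `d₁` clause users under maximal interference
is nonnegative for every `1 ≤ d₁ ≤ D`. -/
theorem jsdm_lemma3_gain_nonneg
    (ρ β δ : ℝ) (hρ : 0 < ρ) (hβ : 0 < β) (hδ : 0 < δ)
    (M D : ℕ) (hM : 1 ≤ M) (hD : 1 ≤ D)
    (hC3 : 0 ≤ (M : ℝ) * logb 2 ((1 + ρ + ((D : ℝ) - 1) * δ) /
        ((1 + ((D : ℝ) - 1) * δ) * (1 + ρ))) +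
      (D : ℝ) * logb 2 ((β * (M : ℝ) + 2 * (M : ℝ) - 1) /
        ((2 * (M : ℝ) - 1) * (1 + β))) + logb 2 (1 + β)) :
    ∀ d₁ : ℕ, 1 ≤ d₁ → d₁ ≤ D →
      0 ≤ (M : ℝ) * logb 2 ((1 + ρ + ((d₁ : ℝ) - 1) * δ) /
          ((1 + ((d₁ : ℝ) - 1) * δ) * (1 + ρ))) +
        (d₁ : ℝ) * logb 2 ((β * (M : ℝ) + 2 * (M : ℝ) - 1) /
          ((2 * (M : ℝ) - 1) * (1 + β))) + logb 2 (1 + β) := by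
  intro d₁ hd1 hdD
  have hMR : (1 : ℝ) ≤ (M : ℝ) := by exact_mod_cast hM
  have hd1R : (1 : ℝ) ≤ (d₁ : ℝ) := by exact_mod_cast hd1
  have hdDR : (d₁ : ℝ) ≤ (D : ℝ) := by exact_mod_cast hdD
  set x : ℝ := ((d₁ : ℝ) - 1) * δ with hxdef
  set X : ℝ := ((D : ℝ) - 1) * δ with hXdef
  have hx0 : 0 ≤ x := mul_nonneg (by linarith) hδ.le
  have hX0 : 0 ≤ X := mul_nonneg (by linarith [hd1R.trans hdDR]) hδ.le
  have hxX : x ≤ X := mul_le_mul_of_nonneg_right (by linarith) hδ.le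
  -- second log is nonpositive
  have h2Mpos : (0 : ℝ) < 2 * (M : ℝ) - 1 := by linarith
  have hden2 : (0 : ℝ) < (2 * (M : ℝ) - 1) * (1 + β) := by positivity
  have hnum2 : (0 : ℝ) < β * (M : ℝ) + 2 * (M : ℝ) - 1 := by nlinarith
  have hB : logb 2 ((β * (M : ℝ) + 2 * (M : ℝ) - 1) /
      ((2 * (M : ℝ) - 1) * (1 + β))) ≤ 0 := by
    apply Real.logb_nonpos (by norm_num) (by positivity)
    rw [div_le_one hden2]
    nlinarith
  have hBle : (D : ℝ) * logb 2 ((β * (M : ℝ) + 2 * (M : ℝ) - 1) /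
      ((2 * (M : ℝ) - 1) * (1 + β))) ≤
      (d₁ : ℝ) * logb 2 ((β * (M : ℝ) + 2 * (M : ℝ) - 1) /
      ((2 * (M : ℝ) - 1) * (1 + β))) :=
    mul_le_mul_of_nonpos_right hdDR hB
  -- first log is decreasing in x
  have hdX : (0 : ℝ) < (1 + X) * (1 + ρ) := by positivity
  have hdx : (0 : ℝ) < (1 + x) * (1 + ρ) := by positivity
  have hfrac : (1 + ρ + X) / ((1 + X) * (1 + ρ)) ≤ (1 + ρ + x) / ((1 + x) * (1 + ρ)) := by
    rw [div_le_div_iff₀ hdX hdx]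
    nlinarith [mul_nonneg (mul_nonneg (by linarith : (0:ℝ) ≤ 1 + ρ) hρ.le) (sub_nonneg.mpr hxX)]
  have hApos : (0 : ℝ) < (1 + ρ + X) / ((1 + X) * (1 + ρ)) := by positivity
  have hAle : logb 2 ((1 + ρ + X) / ((1 + X) * (1 + ρ))) ≤
      logb 2 ((1 + ρ + x) / ((1 + x) * (1 + ρ))) :=
    Real.logb_le_logb_of_le (by norm_num) hApos hfrac
  have hAle' : (M : ℝ) * logb 2 ((1 + ρ + X) / ((1 + X) * (1 + ρ))) ≤
      (M : ℝ) * logb 2 ((1 + ρ + x) / ((1 + x) * (1 + ρ))) :=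
    mul_le_mul_of_nonneg_left hAle (by linarith)
  linarith
end

section
/- Let ρ, β, δ > 0 and let M be a natural number with M ≥ 1. The function f(x) = M·log₂((1 + ρ + (x−1)δ)/((1 + (x−1)δ)(1+ρ))) + x·log₂((βM + 2M − 1)/((2M−1)(1+β))) + log₂(1+β) is strictly decreasing on the interval [1, ∞). Consequently, if f(D) ≥ 0 for a natural number D ≥ 1, then f(d) ≥ 0 for every real d with 1 ≤ d ≤ D. -/
open Real

/-- The auxiliary function in Lemma 3 is strictly decreasing on `[1, ∞)`; hence if
`f D ≥ 0` then `f d ≥ 0` for all real `1 ≤ d ≤ D`. -/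
theorem jsdm_lemma3_aux_strictAnti
    (ρ β δ : ℝ) (hρ : 0 < ρ) (hβ : 0 < β) (hδ : 0 < δ)
    (M : ℕ) (hM : 1 ≤ M)
    (f : ℝ → ℝ)
    (hf : f = fun x : ℝ => (M : ℝ) * logb 2 ((1 + ρ + (x - 1) * δ) /
        ((1 + (x - 1) * δ) * (1 + ρ))) +
      x * logb 2 ((β * (M : ℝ) + 2 * (M : ℝ) - 1) /
        ((2 * (M : ℝ) - 1) * (1 + β))) + logb 2 (1 + β)) :
    StrictAntiOn f (Set.Ici 1) ∧
      (∀ D : ℕ, 1 ≤ D → 0 ≤ f (D : ℝ) →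
        ∀ d : ℝ, 1 ≤ d → d ≤ (D : ℝ) → 0 ≤ f d) := by
  have hM1 : (1 : ℝ) ≤ (M : ℝ) := by exact_mod_cast hM
  have hMpos : (0 : ℝ) < (M : ℝ) := by linarith
  have h2M : (0 : ℝ) < 2 * (M : ℝ) - 1 := by linarith
  have hden : (0 : ℝ) < (2 * (M : ℝ) - 1) * (1 + β) := by positivity
  have hnum : (0 : ℝ) < β * (M : ℝ) + 2 * (M : ℝ) - 1 := by nlinarith
  have hc : logb 2 ((β * (M : ℝ) + 2 * (M : ℝ) - 1) /
      ((2 * (M : ℝ) - 1) * (1 + β))) ≤ 0 := by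
    apply Real.logb_nonpos (by norm_num) (by positivity)
    rw [div_le_one hden]
    nlinarith
  have hanti : StrictAntiOn f (Set.Ici 1) := by
    intro x hx y hy hxy
    simp only [Set.mem_Ici] at hx hy
    subst hf
    simp only
    have htx : (0 : ℝ) ≤ (x - 1) * δ := by
      have : (0:ℝ) ≤ x - 1 := by linarith
      positivity
    have hty : (0 : ℝ) ≤ (y - 1) * δ := by
      have : (0:ℝ) ≤ y - 1 := by linarith
      positivity
    have htxy : (x - 1) * δ < (y - 1) * δ := by
      apply mul_lt_mul_of_pos_right (by linarith) hδ
    set tx := (x - 1) * δ with htxdef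
    set ty := (y - 1) * δ with htydef
    have hdx : (0 : ℝ) < (1 + tx) * (1 + ρ) := by positivity
    have hdy : (0 : ℝ) < (1 + ty) * (1 + ρ) := by positivity
    have hgy : (0 : ℝ) < (1 + ρ + ty) / ((1 + ty) * (1 + ρ)) := by positivity
    have hglt : (1 + ρ + ty) / ((1 + ty) * (1 + ρ)) <
        (1 + ρ + tx) / ((1 + tx) * (1 + ρ)) := by
      rw [div_lt_div_iff₀ hdy hdx]
      nlinarith [mul_lt_mul_of_pos_left htxy hρ]
    have h1 : (M : ℝ) * logb 2 ((1 + ρ + ty) / ((1 + ty) * (1 + ρ))) <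
        (M : ℝ) * logb 2 ((1 + ρ + tx) / ((1 + tx) * (1 + ρ))) := by
      apply mul_lt_mul_of_pos_left _ hMpos
      exact Real.logb_lt_logb (by norm_num) hgy hglt
    have h2 : y * logb 2 ((β * (M : ℝ) + 2 * (M : ℝ) - 1) /
        ((2 * (M : ℝ) - 1) * (1 + β))) ≤
        x * logb 2 ((β * (M : ℝ) + 2 * (M : ℝ) - 1) /
        ((2 * (M : ℝ) - 1) * (1 + β))) :=
      mul_le_mul_of_nonpos_right (le_of_lt hxy) hc
    linarith
  refine ⟨hanti, ?_⟩
  intro D hD hfD d hd hdD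
  rcases eq_or_lt_of_le hdD with h | h
  · rw [h]; exact hfD
  · have hDmem : (D : ℝ) ∈ Set.Ici (1 : ℝ) := by
      simp only [Set.mem_Ici]; linarith
    have := hanti (Set.mem_Ici.mpr hd) hDmem h
    linarith
end

section
/- For every pair of natural numbers M₁ ≥ 1 and D₁ ≥ 1 and every real δ₁ > 0, there exist reals ρ > 0 and β > 0 such that all three conditions C1, C2 and C3 (with M = M₁, D = D₁, δ = δ₁) hold simultaneously. In particular, it suffices to choose ρ ≥ ((1 − 1/(M₁+1))^{−D₁} − 1)·(1 + (D₁−1)δ₁) and β ≥ max{ ((1 − δ₁/(1+δ₁))^{−M₁} − 1)·(1 + (M₁−1)/M₁), 2^{D₁}·(1 − (D₁−1)δ₁/(1+(D₁−1)δ₁))^{−M₁} − 1 }. -/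
/-!
Each condition is `logb 2` of a product of powers being nonnegative, so it suffices to bound
every factor from below by a simple quantity such that the bounds multiply to `1`. For `ρ, β ≥ 0`
the interference factors are at least `(1 + δ)⁻¹`, `(1 + (D - 1)δ)⁻¹`, `M / (M + 1)` and `1 / 2`;
the thresholds on `ρ` and `β` are exactly what makes the remaining factor large enough to
compensate.
-/

open Real

/-- Condition C1 of the NP-hardness reduction. -/
def JSDM.C1 (ρ β δ : ℝ) (M : ℕ) : Prop :=
  0 ≤ Real.logb 2 (1 + β / (1 + ((M : ℝ) - 1) / (M : ℝ))) +
    (M : ℝ) * Real.logb 2 (1 - ρ * δ / ((1 + ρ) * (1 + δ)))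

/-- Condition C2 of the NP-hardness reduction. -/
def JSDM.C2 (ρ β δ : ℝ) (M D : ℕ) : Prop :=
  0 ≤ Real.logb 2 (1 + ρ / (1 + ((D : ℝ) - 1) * δ)) +
    (D : ℝ) * Real.logb 2 (1 - β / ((β + 1) * ((M : ℝ) + 1)))

/-- Condition C3 of the NP-hardness reduction. -/
def JSDM.C3 (ρ β δ : ℝ) (M D : ℕ) : Prop :=
  0 ≤ (M : ℝ) * Real.logb 2 ((1 + ρ + ((D : ℝ) - 1) * δ) /
      ((1 + ((D : ℝ) - 1) * δ) * (1 + ρ))) +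
    (D : ℝ) * Real.logb 2 ((β * (M : ℝ) + 2 * (M : ℝ) - 1) /
      ((2 * (M : ℝ) - 1) * (1 + β))) + Real.logb 2 (1 + β)

theorem neg_natCast_mul_logb_le {b c y : ℝ} (hb : 1 < b) (hc : 0 < c) (hy : c⁻¹ ≤ y) (n : ℕ) :
    -(n * logb b c) ≤ n * logb b y := by
  rw [← mul_neg, ← logb_inv]
  exact mul_le_mul_of_nonneg_left (logb_le_logb_of_le hb (inv_pos.2 hc) hy) n.cast_nonneg

theorem logb_add_natCast_mul_logb_nonneg {b c x y : ℝ} {n : ℕ} (hb : 1 < b) (hc : 0 < c)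
    (hx : c ^ n ≤ x) (hy : c⁻¹ ≤ y) : 0 ≤ logb b x + n * logb b y := by
  have hx' := logb_le_logb_of_le hb (pow_pos hc n) hx
  rw [logb_pow] at hx'
  linarith [neg_natCast_mul_logb_le hb hc hy n]

theorem natCast_mul_logb_add_natCast_mul_logb_add_logb_nonneg {b c d u v w : ℝ} {m n : ℕ}
    (hb : 1 < b) (hc : 0 < c) (hd : 0 < d) (hu : c⁻¹ ≤ u) (hv : d⁻¹ ≤ v)
    (hw : c ^ m * d ^ n ≤ w) : 0 ≤ m * logb b u + n * logb b v + logb b w := by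
  have hw' := logb_le_logb_of_le hb (by positivity) hw
  rw [logb_mul (by positivity) (by positivity), logb_pow, logb_pow] at hw'
  linarith [neg_natCast_mul_logb_le hb hc hu m, neg_natCast_mul_logb_le hb hd hv n]

theorem inv_one_sub_div_one_add_pow {x : ℝ} (hx : 1 + x ≠ 0) (n : ℕ) :
    ((1 - x / (1 + x)) ^ n)⁻¹ = (1 + x) ^ n := by
  rw [show 1 - x / (1 + x) = (1 + x)⁻¹ by field_simp; ring, inv_pow, inv_inv]

theorem inv_one_sub_one_div_add_one_pow {m : ℝ} (hm : m + 1 ≠ 0) (n : ℕ) :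
    ((1 - 1 / (m + 1)) ^ n)⁻¹ = ((m + 1) / m) ^ n := by
  rw [show 1 - 1 / (m + 1) = m / (m + 1) by field_simp; ring, ← inv_pow, inv_div]

theorem inv_one_add_le_div_mul {ρ a : ℝ} (hρ : 0 ≤ ρ) (ha : 0 ≤ a) :
    (1 + a)⁻¹ ≤ (1 + ρ + a) / ((1 + a) * (1 + ρ)) := by
  rw [inv_eq_one_div, div_le_div_iff₀ (by positivity) (by positivity)]
  nlinarith

namespace JSDM

theorem natCast_sub_one_mul_nonneg {D : ℕ} {δ : ℝ} (hD : 1 ≤ D) (hδ : 0 ≤ δ) :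
    0 ≤ ((D : ℝ) - 1) * δ :=
  mul_nonneg (by simpa using hD) hδ

theorem c1_of_le {ρ β δ : ℝ} {M : ℕ} (hρ : 0 ≤ ρ) (hδ : 0 ≤ δ)
    (hβ : ((1 + δ) ^ M - 1) * (1 + ((M : ℝ) - 1) / M) ≤ β) : C1 ρ β δ M := by
  have hcoef : 0 < 1 + ((M : ℝ) - 1) / M := by
    rcases M.eq_zero_or_pos with rfl | hM
    · simp
    · have : (1 : ℝ) ≤ M := by exact_mod_cast hM
      have : 0 ≤ ((M : ℝ) - 1) / M := div_nonneg (by linarith) (by linarith)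
      linarith
  have hfactor : (1 + δ)⁻¹ ≤ 1 - ρ * δ / ((1 + ρ) * (1 + δ)) := by
    rw [show 1 - ρ * δ / ((1 + ρ) * (1 + δ)) = (1 + ρ + δ) / ((1 + δ) * (1 + ρ)) by
      field_simp; ring]
    exact inv_one_add_le_div_mul hρ hδ
  refine logb_add_natCast_mul_logb_nonneg one_lt_two (by positivity) ?_ hfactor
  rw [← sub_le_iff_le_add', le_div_iff₀ hcoef]
  exact hβ

theorem c2_of_le {ρ β δ : ℝ} {M D : ℕ} (hM : 0 < M) (hD : 1 ≤ D) (hδ : 0 ≤ δ) (hβ : 0 ≤ β)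
    (hρ : ((((M : ℝ) + 1) / M) ^ D - 1) * (1 + ((D : ℝ) - 1) * δ) ≤ ρ) :
    C2 ρ β δ M D := by
  have hm : (0 : ℝ) < M := by exact_mod_cast hM
  have ha : 0 < 1 + ((D : ℝ) - 1) * δ := by linarith [natCast_sub_one_mul_nonneg hD hδ]
  have hfactor : (((M : ℝ) + 1) / M)⁻¹ ≤ 1 - β / ((β + 1) * ((M : ℝ) + 1)) := by
    rw [inv_div, le_sub_iff_add_le, div_add_div _ _ (by positivity) (by positivity),
      div_le_one (by positivity)]
    nlinarith
  refine logb_add_natCast_mul_logb_nonneg one_lt_two (by positivity) ?_ hfactor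
  rw [← sub_le_iff_le_add', le_div_iff₀ ha]
  exact hρ

theorem c3_of_le {ρ β δ : ℝ} {M D : ℕ} (hM : 0 < M) (hD : 1 ≤ D) (hδ : 0 ≤ δ) (hρ : 0 ≤ ρ)
    (hβ : 2 ^ D * (1 + ((D : ℝ) - 1) * δ) ^ M - 1 ≤ β) : C3 ρ β δ M D := by
  have hm : (1 : ℝ) ≤ M := by exact_mod_cast hM
  have ha := natCast_sub_one_mul_nonneg hD hδ
  have hβ0 : 0 ≤ β := by
    have : (1 : ℝ) ≤ 2 ^ D * (1 + ((D : ℝ) - 1) * δ) ^ M :=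
      one_le_mul_of_one_le_of_one_le (one_le_pow₀ one_le_two) (one_le_pow₀ (by linarith))
    linarith
  have hhalf : (2 : ℝ)⁻¹ ≤ (β * M + 2 * M - 1) / ((2 * M - 1) * (1 + β)) := by
    rw [inv_eq_one_div, div_le_div_iff₀ (by positivity) (by nlinarith)]
    nlinarith
  refine natCast_mul_logb_add_natCast_mul_logb_add_logb_nonneg one_lt_two (by positivity)
    two_pos (inv_one_add_le_div_mul hρ ha) hhalf ?_
  linarith

end JSDM

/-- Lemma 4: for any `M₁ ≥ 1`, `D₁ ≥ 1` and `δ₁ > 0`, there exist `ρ, β > 0`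
satisfying C1, C2 and C3 simultaneously; in particular the explicit choices
`ρ ≥ ((1 - 1/(M₁+1))^{-D₁} - 1)(1 + (D₁-1)δ₁)` and
`β ≥ max{((1 - δ₁/(1+δ₁))^{-M₁} - 1)(1 + (M₁-1)/M₁),
        2^{D₁}(1 - (D₁-1)δ₁/(1+(D₁-1)δ₁))^{-M₁} - 1}` suffice. -/
theorem jsdm_lemma4_conditions_satisfiable
    (M₁ D₁ : ℕ) (hM : 1 ≤ M₁) (hD : 1 ≤ D₁) (δ₁ : ℝ) (hδ : 0 < δ₁) :
    (∃ ρ β : ℝ, 0 < ρ ∧ 0 < β ∧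
      JSDM.C1 ρ β δ₁ M₁ ∧ JSDM.C2 ρ β δ₁ M₁ D₁ ∧ JSDM.C3 ρ β δ₁ M₁ D₁) ∧
    (∀ ρ β : ℝ,
      (((1 - 1 / ((M₁ : ℝ) + 1)) ^ D₁)⁻¹ - 1) * (1 + ((D₁ : ℝ) - 1) * δ₁) ≤ ρ →
      max ((((1 - δ₁ / (1 + δ₁)) ^ M₁)⁻¹ - 1) * (1 + ((M₁ : ℝ) - 1) / (M₁ : ℝ)))
          ((2 : ℝ) ^ D₁ *
            ((1 - ((D₁ : ℝ) - 1) * δ₁ / (1 + ((D₁ : ℝ) - 1) * δ₁)) ^ M₁)⁻¹ - 1) ≤ β →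
      JSDM.C1 ρ β δ₁ M₁ ∧ JSDM.C2 ρ β δ₁ M₁ D₁ ∧ JSDM.C3 ρ β δ₁ M₁ D₁) := by
  have ha := JSDM.natCast_sub_one_mul_nonneg hD hδ.le
  rw [inv_one_sub_one_div_add_one_pow (by positivity), inv_one_sub_div_one_add_pow (x := δ₁)
    (by positivity), inv_one_sub_div_one_add_pow (by positivity)]
  have hρ₀ : 0 < ((((M₁ : ℝ) + 1) / M₁) ^ D₁ - 1) * (1 + ((D₁ : ℝ) - 1) * δ₁) := by
    have : (1 : ℝ) < ((M₁ : ℝ) + 1) / M₁ := by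
      rw [one_lt_div (by positivity)]
      linarith
    exact mul_pos (sub_pos.2 (one_lt_pow₀ this (by omega))) (by positivity)
  have hβ₀ : 0 < (2 : ℝ) ^ D₁ * (1 + ((D₁ : ℝ) - 1) * δ₁) ^ M₁ - 1 :=
    sub_pos.2 (one_lt_mul_of_lt_of_le (one_lt_pow₀ one_lt_two (by omega))
      (one_le_pow₀ (by linarith)))
  refine (and_iff_right_of_imp fun hsufficient =>
    ⟨_, _, hρ₀, lt_max_of_lt_right hβ₀, hsufficient _ _ le_rfl le_rfl⟩).2 ?_
  intro ρ β hρ hβ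
  rw [max_le_iff] at hβ
  have hρ0 : 0 ≤ ρ := hρ₀.le.trans hρ
  exact ⟨JSDM.c1_of_le hρ0 hδ.le hβ.1, JSDM.c2_of_le hM hD hδ.le (hβ₀.le.trans hβ.2) hρ,
    JSDM.c3_of_le hM hD hδ.le hρ0 hβ.2⟩
end

section
/- Let M ≥ 1 be a natural number and δ > 0 a real. If β ≥ ((1 − δ/(1+δ))^{−M} − 1)·(1 + (M−1)/M), then for every real ρ > 0 condition C1 holds, i.e. log₂(1 + β/(1 + (M−1)/M)) + M·log₂(1 − ρδ/((1+ρ)(1+δ))) ≥ 0. (The proof uses that M·log₂(1 − ρδ/((1+ρ)(1+δ))) ≥ M·log₂(1 − δ/(1+δ)) since ρ/(1+ρ) < 1.) -/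
open Real

/-- If `β ≥ ((1 - δ/(1+δ))^{-M} - 1)(1 + (M-1)/M)` then condition C1 holds for
every `ρ > 0`. -/
theorem jsdm_C1_sufficient_beta
    (M : ℕ) (hM : 1 ≤ M) (δ : ℝ) (hδ : 0 < δ) (β : ℝ)
    (hβ : (((1 - δ / (1 + δ)) ^ M)⁻¹ - 1) * (1 + ((M : ℝ) - 1) / (M : ℝ)) ≤ β) :
    ∀ ρ : ℝ, 0 < ρ →
      0 ≤ logb 2 (1 + β / (1 + ((M : ℝ) - 1) / (M : ℝ))) +
        (M : ℝ) * logb 2 (1 - ρ * δ / ((1 + ρ) * (1 + δ))) := by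
  intro ρ hρ
  have hMR : (1 : ℝ) ≤ (M : ℝ) := by exact_mod_cast hM
  have hc : (0 : ℝ) < 1 + ((M : ℝ) - 1) / (M : ℝ) := by
    have : (0 : ℝ) ≤ ((M : ℝ) - 1) / (M : ℝ) := div_nonneg (by linarith) (by linarith)
    linarith
  have h1δ : (0 : ℝ) < 1 + δ := by linarith
  have ha : (0 : ℝ) < 1 - δ / (1 + δ) := by
    rw [sub_pos, div_lt_one h1δ]; linarith
  have haM : (0 : ℝ) < (1 - δ / (1 + δ)) ^ M := pow_pos ha M
  -- second term bound
  have h1ρ : (0 : ℝ) < 1 + ρ := by linarith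
  have hterm2 : 1 - δ / (1 + δ) ≤ 1 - ρ * δ / ((1 + ρ) * (1 + δ)) := by
    have : ρ * δ / ((1 + ρ) * (1 + δ)) ≤ δ / (1 + δ) := by
      rw [div_le_div_iff₀ (by positivity) h1δ]
      nlinarith
    linarith
  have hlog2 : logb 2 (1 - δ / (1 + δ)) ≤ logb 2 (1 - ρ * δ / ((1 + ρ) * (1 + δ))) :=
    logb_le_logb_of_le one_lt_two ha hterm2
  -- first term bound
  have hfirst : ((1 - δ / (1 + δ)) ^ M)⁻¹ ≤ 1 + β / (1 + ((M : ℝ) - 1) / (M : ℝ)) := by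
    have h2 : ((1 - δ / (1 + δ)) ^ M)⁻¹ - 1 ≤ β / (1 + ((M : ℝ) - 1) / (M : ℝ)) := by
      rw [le_div_iff₀ hc]; exact hβ
    linarith
  have hlog1 : logb 2 (((1 - δ / (1 + δ)) ^ M)⁻¹) ≤
      logb 2 (1 + β / (1 + ((M : ℝ) - 1) / (M : ℝ))) :=
    logb_le_logb_of_le one_lt_two (by positivity) hfirst
  have hinv : logb 2 (((1 - δ / (1 + δ)) ^ M)⁻¹) = -((M : ℝ) * logb 2 (1 - δ / (1 + δ))) := by
    rw [logb_inv, logb_pow]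
  have := mul_le_mul_of_nonneg_left hlog2 (by positivity : (0:ℝ) ≤ (M : ℝ))
  nlinarith [hlog1, hinv]
end

section
/- Let M ≥ 1 and D ≥ 1 be natural numbers and δ > 0 a real. If ρ ≥ ((1 − 1/(M+1))^{−D} − 1)·(1 + (D−1)δ), then for every real β > 0 condition C2 holds, i.e. log₂(1 + ρ/(1 + (D−1)δ)) + D·log₂(1 − β/((β+1)(M+1))) ≥ 0. (The proof uses that D·log₂(1 − β/((β+1)(M+1))) ≥ D·log₂(1 − 1/(M+1)) since β/(β+1) < 1.) -/
open Real

/-- If `ρ ≥ ((1 - 1/(M+1))^{-D} - 1)(1 + (D-1)δ)` then condition C2 holds for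
every `β > 0`. -/
theorem jsdm_C2_sufficient_rho
    (M D : ℕ) (hM : 1 ≤ M) (hD : 1 ≤ D) (δ : ℝ) (hδ : 0 < δ) (ρ : ℝ)
    (hρ : (((1 - 1 / ((M : ℝ) + 1)) ^ D)⁻¹ - 1) * (1 + ((D : ℝ) - 1) * δ) ≤ ρ) :
    ∀ β : ℝ, 0 < β →
      0 ≤ logb 2 (1 + ρ / (1 + ((D : ℝ) - 1) * δ)) +
        (D : ℝ) * logb 2 (1 - β / ((β + 1) * ((M : ℝ) + 1))) := by
  intro β hβ
  have hM1 : (0:ℝ) < (M:ℝ) + 1 := by positivity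
  have hDR : (1:ℝ) ≤ (D:ℝ) := by exact_mod_cast hD
  have hc : (0:ℝ) < 1 + ((D : ℝ) - 1) * δ := by nlinarith
  set a : ℝ := 1 - 1 / ((M : ℝ) + 1) with ha_def
  have hMR : (1:ℝ) ≤ (M:ℝ) := by exact_mod_cast hM
  have ha0 : 0 < a := by
    have : 1 / ((M:ℝ) + 1) < 1 := by
      rw [div_lt_one hM1]; linarith
    simp only [ha_def]; linarith
  have haD : 0 < a ^ D := pow_pos ha0 D
  -- first term bound
  have h1 : (a ^ D)⁻¹ ≤ 1 + ρ / (1 + ((D : ℝ) - 1) * δ) := by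
    have h' : ((a ^ D)⁻¹ - 1) ≤ ρ / (1 + ((D : ℝ) - 1) * δ) := by
      rw [le_div_iff₀ hc]; exact hρ
    linarith
  have hlog1 : logb 2 (a ^ D)⁻¹ ≤ logb 2 (1 + ρ / (1 + ((D : ℝ) - 1) * δ)) :=
    logb_le_logb_of_le one_lt_two (by positivity) h1
  have hlog1' : logb 2 (a ^ D)⁻¹ = -((D:ℝ) * logb 2 a) := by
    rw [logb_inv, logb_pow]
  -- second term bound
  have hb1 : 0 < β + 1 := by linarith
  have h2 : a ≤ 1 - β / ((β + 1) * ((M : ℝ) + 1)) := by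
    have key : β / ((β + 1) * ((M : ℝ) + 1)) ≤ 1 / ((M:ℝ) + 1) := by
      rw [div_le_div_iff₀ (by positivity) hM1]
      nlinarith
    simp only [ha_def]; linarith
  have hlog2 : logb 2 a ≤ logb 2 (1 - β / ((β + 1) * ((M : ℝ) + 1))) :=
    logb_le_logb_of_le one_lt_two ha0 h2
  have hD0 : (0:ℝ) ≤ (D:ℝ) := by positivity
  nlinarith [mul_le_mul_of_nonneg_left hlog2 hD0]
end
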